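/- arXiv:2401.08312 — 3 statements merged into one kernel-verified Lean document; each statement's English description precedes it below -/
import Mathlib

section
/- Let n ∈ ℕ^r be a multi-index near the diagonal and let A_1, …, A_r be real polynomials with deg A_j ≤ n_j − 1 (A_j = 0 if n_j = 0). Set F(x) = Σ_{j=1}^r A_j(x) w_j(x). Then there exists a real polynomial p of degree at most |n| − 1 such that for every real s > 1, ∫₀¹ F(x) x^{s−1} dx = (Γ(s+a)/Γ(s+b+n)) · p(s), where b+n is the componentwise sum. -/
/-!
Expanding `A j` in monomials reduces the Mellin transform of `F` at `s` to the values of the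
Mellin transform of `w j` at `s + k`, `k < n j`, namely `Γ(s+k+a) / Γ(s+k+b+e_j)`. Since `n` is
near the diagonal, `k < n j` forces `e_j + k ≤ n` componentwise, so
`Γ(s+b+n) = Γ(s+k+b+e_j) · (s+b+e_j+k)_(n-e_j-k)` and `Γ(s+k+a) = Γ(s+a) · (s+a)_k`.
Each term is therefore `Γ(s+a)/Γ(s+b+n)` times the polynomial `(s+a)_k · (s+b+e_j+k)_(n-e_j-k)`,
of degree `r k + (|n| - 1 - r k) = |n| - 1`.
-/

open MeasureTheory Finset Polynomial

theorem Real.Gamma_add_nat_eq_mul_ascPochhammer {x : ℝ} (hx : 0 < x) (k : ℕ) :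
    Real.Gamma (x + k) = Real.Gamma x * (ascPochhammer ℝ k).eval x := by
  induction k with
  | zero => simp
  | succ m ih =>
    rw [Nat.cast_succ, ← add_assoc, Real.Gamma_add_one (by positivity), ih,
      ascPochhammer_succ_right]
    simp only [eval_mul, eval_add, eval_X, eval_natCast]
    ring

theorem Polynomial.eval_eq_sum_range_of_degree_lt {R : Type*} [Semiring R] {p : R[X]} {n : ℕ}
    (hp : p.degree < n) (x : R) : p.eval x = ∑ k ∈ range n, p.coeff k * x ^ k := by
  by_cases h : p = 0
  · simp [h]
  · exact eval_eq_sum_range' ((natDegree_lt_iff_degree_lt h).2 hp) x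

section MultiAscPochhammer

variable {ι : Type*} [Fintype ι]

noncomputable def multiAscPochhammer (m : ι → ℕ) (c : ι → ℝ) : ℝ[X] :=
  ∏ i, (ascPochhammer ℝ (m i)).comp (X + C (c i))

theorem eval_multiAscPochhammer (m : ι → ℕ) (c : ι → ℝ) (s : ℝ) :
    (multiAscPochhammer m c).eval s = ∏ i, (ascPochhammer ℝ (m i)).eval (s + c i) := by
  simp [multiAscPochhammer, eval_prod, eval_comp]

theorem natDegree_multiAscPochhammer_le (m : ι → ℕ) (c : ι → ℝ) :
    (multiAscPochhammer m c).natDegree ≤ ∑ i, m i := by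
  refine (natDegree_prod_le _ _).trans (sum_le_sum fun i _ => natDegree_comp_le.trans ?_)
  rw [ascPochhammer_natDegree, natDegree_X_add_C, mul_one]

theorem eval_multiAscPochhammer_pos {m : ι → ℕ} {c : ι → ℝ} {s : ℝ} (h : ∀ i, 0 < s + c i) :
    0 < (multiAscPochhammer m c).eval s := by
  rw [eval_multiAscPochhammer]
  exact prod_pos fun i _ => ascPochhammer_pos _ _ (h i)

theorem prod_Gamma_add_eq_mul_multiAscPochhammer {m : ι → ℕ} {c : ι → ℝ} {s : ℝ}
    (h : ∀ i, 0 < s + c i) :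
    ∏ i, Real.Gamma (s + c i + m i) =
      (∏ i, Real.Gamma (s + c i)) * (multiAscPochhammer m c).eval s := by
  rw [eval_multiAscPochhammer, ← prod_mul_distrib]
  exact prod_congr rfl fun i _ => Real.Gamma_add_nat_eq_mul_ascPochhammer (h i) (m i)

end MultiAscPochhammer

theorem ite_add_le_of_near_diagonal {ι : Type*} [DecidableEq ι] {n : ι → ℕ}
    (hn : ∀ i j, |(n i : ℤ) - (n j : ℤ)| ≤ 1) {j : ι} {k : ℕ} (hk : k < n j) (i : ι) :
    (if i = j then 1 else 0) + k ≤ n i := by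
  have := abs_le.mp (hn i j)
  split_ifs with h
  · subst h; omega
  · omega

theorem integrableOn_rpow_mul_of_abs {f : ℝ → ℝ} {U : Set ℝ} (hU : MeasurableSet U)
    (hU_pos : U ⊆ Set.Ioi 0) (hf : ContinuousOn f U) {σ : ℝ}
    (hint : IntegrableOn (fun x => x ^ (σ - 1) * |f x|) U) :
    IntegrableOn (fun x => x ^ (σ - 1) * f x) U := by
  have hmeas : AEStronglyMeasurable (fun x => x ^ (σ - 1) * f x) (volume.restrict U) :=
    ((continuousOn_id.rpow_const fun x hx => Or.inl (hU_pos hx).ne').mul hf).aestronglyMeasurable hU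
  refine hint.mono' hmeas ?_
  filter_upwards [ae_restrict_mem hU] with x hx
  rw [Real.norm_eq_abs, abs_mul, abs_of_nonneg (Real.rpow_nonneg (hU_pos hx).le _)]

theorem setIntegral_sum_eval_mul_rpow {ι : Type*} [Fintype ι] {A : ι → ℝ[X]} {n : ι → ℕ}
    (hA : ∀ j, (A j).degree < n j) {f : ι → ℝ → ℝ} {s : ℝ}
    (hf : ∀ j (k : ℕ), IntegrableOn (fun x => x ^ (s + k - 1) * f j x) (Set.Ioo 0 1)) :
    ∫ x in Set.Ioo (0:ℝ) 1, (∑ j, (A j).eval x * f j x) * x ^ (s - 1) =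
      ∑ j, ∑ k ∈ range (n j), (A j).coeff k * ∫ x in Set.Ioo (0:ℝ) 1, x ^ (s + k - 1) * f j x := by
  have hexpand : ∀ x ∈ Set.Ioo (0:ℝ) 1, (∑ j, (A j).eval x * f j x) * x ^ (s - 1) =
      ∑ j, ∑ k ∈ range (n j), (A j).coeff k * (x ^ (s + k - 1) * f j x) := by
    intro x hx
    simp_rw [sum_mul, eval_eq_sum_range_of_degree_lt (hA _), sum_mul]
    refine sum_congr rfl fun j _ => sum_congr rfl fun k _ => ?_
    rw [add_sub_right_comm, Real.rpow_add hx.1, Real.rpow_natCast]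
    ring
  rw [setIntegral_congr_fun measurableSet_Ioo hexpand,
    integral_finsetSum _ fun j _ => integrable_finsetSum _ fun k _ => (hf j k).const_mul _]
  refine sum_congr rfl fun j _ => ?_
  rw [integral_finsetSum _ fun k _ => (hf j k).const_mul _]
  simp_rw [integral_const_mul]
section MonomialMellin

variable {ι : Type*} [Fintype ι] [DecidableEq ι]

noncomputable def monomialMellinPoly (a b : ι → ℝ) (n : ι → ℕ) (j : ι) (k : ℕ) : ℝ[X] :=
  multiAscPochhammer (fun _ => k) a *
    multiAscPochhammer (fun i => n i - ((if i = j then 1 else 0) + k))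
      (fun i => b i + (((if i = j then 1 else 0) + k : ℕ) : ℝ))

theorem degree_monomialMellinPoly_lt (a b : ι → ℝ) {n : ι → ℕ}
    (hn : ∀ i j, |(n i : ℤ) - (n j : ℤ)| ≤ 1) {j : ι} {k : ℕ} (hk : k < n j) :
    (monomialMellinPoly a b n j k).degree < (∑ i, n i : ℕ) := by
  have hδ : ∑ i : ι, (if i = j then 1 else 0) = 1 := by simp
  have hsplit : ∑ i, (k + (n i - ((if i = j then 1 else 0) + k))) +
      ∑ i : ι, (if i = j then 1 else 0) = ∑ i, n i := by
    rw [← sum_add_distrib]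
    refine sum_congr rfl fun i _ => ?_
    have := ite_add_le_of_near_diagonal hn hk i
    generalize (if i = j then 1 else 0) = d at this ⊢
    omega
  refine degree_le_natDegree.trans_lt (WithBot.coe_lt_coe.2 ?_)
  refine (natDegree_mul_le.trans (add_le_add (natDegree_multiAscPochhammer_le _ _)
    (natDegree_multiAscPochhammer_le _ _))).trans_lt ?_
  rw [← sum_add_distrib, Nat.cast_id]
  omega

theorem setIntegral_rpow_mul_eq_mul_monomialMellinPoly {a b : ι → ℝ} (ha : ∀ i, -1 < a i)
    (hb : ∀ i, -1 < b i) {w : ι → ℝ → ℝ}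
    (hw_mellin : ∀ j, ∀ s : ℝ, 1 < s →
      ∫ x in Set.Ioo (0:ℝ) 1, x ^ (s - 1) * w j x
        = (∏ i, Real.Gamma (s + a i)) /
          (∏ i, Real.Gamma (s + b i + if i = j then 1 else 0)))
    {n : ι → ℕ} (hn : ∀ i j, |(n i : ℤ) - (n j : ℤ)| ≤ 1) {j : ι} {k : ℕ} (hk : k < n j)
    {s : ℝ} (hs : 1 < s) :
    ∫ x in Set.Ioo (0:ℝ) 1, x ^ (s + k - 1) * w j x =
      (∏ i, Real.Gamma (s + a i)) / (∏ i, Real.Gamma (s + b i + n i)) *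
        (monomialMellinPoly a b n j k).eval s := by
  have hk0 : (0:ℝ) ≤ k := k.cast_nonneg
  have hshift : ∀ i, 0 < s + (b i + (((if i = j then 1 else 0) + k : ℕ) : ℝ)) := fun i => by
    linarith [hb i, Nat.cast_nonneg (α := ℝ) ((if i = j then 1 else 0) + k)]
  have hnum : ∏ i, Real.Gamma (s + k + a i) =
      (∏ i, Real.Gamma (s + a i)) * (multiAscPochhammer (fun _ => k) a).eval s := by
    rw [← prod_Gamma_add_eq_mul_multiAscPochhammer fun i => by linarith [ha i]]
    exact prod_congr rfl fun i _ => by ring_nf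
  have hden : ∏ i, Real.Gamma (s + b i + n i) =
      (∏ i, Real.Gamma (s + k + b i + if i = j then 1 else 0)) *
        (multiAscPochhammer (fun i => n i - ((if i = j then 1 else 0) + k))
          (fun i => b i + (((if i = j then 1 else 0) + k : ℕ) : ℝ))).eval s := by
    calc ∏ i, Real.Gamma (s + b i + n i)
        = ∏ i, Real.Gamma (s + (b i + (((if i = j then 1 else 0) + k : ℕ) : ℝ)) +
            ((n i - ((if i = j then 1 else 0) + k) : ℕ) : ℝ)) :=
          prod_congr rfl fun i _ => by
            rw [Nat.cast_sub (ite_add_le_of_near_diagonal hn hk i)]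
            ring_nf
      _ = _ := prod_Gamma_add_eq_mul_multiAscPochhammer hshift
      _ = _ := by
          congr 1
          exact prod_congr rfl fun i _ => by push_cast; ring_nf
  have hpos := eval_multiAscPochhammer_pos (m := fun i => n i - ((if i = j then 1 else 0) + k))
    hshift
  rw [hw_mellin j _ (by linarith), hnum, hden, monomialMellinPoly, eval_mul]
  field_simp

end MonomialMellin

theorem stmt_0_general
    (r : ℕ)
    (a b : Fin r → ℝ)
    (ha : ∀ i, -1 < a i) (hb : ∀ i, -1 < b i)
    (w : Fin r → ℝ → ℝ)
    (hw_cont : ∀ j, ContinuousOn (w j) (Set.Ioo 0 1))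
    (hw_int : ∀ j, ∀ σ : ℝ, 0 < σ →
      IntegrableOn (fun x : ℝ => x ^ (σ - 1) * |w j x|) (Set.Ioo 0 1))
    (hw_mellin : ∀ j, ∀ s : ℝ, 1 < s →
      ∫ x in Set.Ioo (0:ℝ) 1, x ^ (s - 1) * w j x
        = (∏ i, Real.Gamma (s + a i)) /
          (∏ i, Real.Gamma (s + b i + if i = j then 1 else 0)))
    (n : Fin r → ℕ)
    (hn : ∀ i j, |(n i : ℤ) - (n j : ℤ)| ≤ 1)
    (A : Fin r → Polynomial ℝ)
    (hA : ∀ j, (A j).degree < (n j : WithBot ℕ)) :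
    ∃ p : Polynomial ℝ, p.degree < ((∑ j, n j : ℕ) : WithBot ℕ) ∧
      ∀ s : ℝ, 1 < s →
        ∫ x in Set.Ioo (0:ℝ) 1, (∑ j, (A j).eval x * w j x) * x ^ (s - 1)
          = (∏ i, Real.Gamma (s + a i)) /
            (∏ i, Real.Gamma (s + b i + n i)) * p.eval s := by
  refine ⟨∑ j, ∑ k ∈ range (n j), (A j).coeff k • monomialMellinPoly a b n j k, ?_, fun s hs => ?_⟩
  · rw [← mem_degreeLT]
    exact Submodule.sum_mem _ fun j _ => Submodule.sum_mem _ fun k hk => Submodule.smul_mem _ _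
      (mem_degreeLT.2 (degree_monomialMellinPoly_lt a b hn (mem_range.1 hk)))
  · have hw : ∀ j (k : ℕ), IntegrableOn (fun x => x ^ (s + k - 1) * w j x) (Set.Ioo 0 1) :=
      fun j k => integrableOn_rpow_mul_of_abs measurableSet_Ioo Set.Ioo_subset_Ioi_self
        (hw_cont j) (hw_int j _ (by linarith [k.cast_nonneg (α := ℝ)]))
    rw [setIntegral_sum_eval_mul_rpow hA hw]
    simp only [eval_finsetSum, eval_smul, smul_eq_mul, mul_sum]
    refine sum_congr rfl fun j _ => sum_congr rfl fun k hk => ?_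
    rw [setIntegral_rpow_mul_eq_mul_monomialMellinPoly ha hb hw_mellin hn (mem_range.1 hk) hs]
    ring

/-- In the Jacobi-like setting, for a multi-index `n` near the diagonal and
polynomials `A j` with `deg A j ≤ n j - 1`, the Mellin transform of
`F(x) = ∑ j, A j (x) * w j (x)` equals `Γ(s+a)/Γ(s+b+n)` times a polynomial of
degree at most `|n| - 1`. -/
theorem stmt_0
    (r : ℕ) (hr : 1 ≤ r)
    (a b : Fin r → ℝ)
    (ha : ∀ i, -1 < a i) (hb : ∀ i, -1 < b i) (hab : ∀ i, a i < b i)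
    (w : Fin r → ℝ → ℝ)
    (hw_cont : ∀ j, ContinuousOn (w j) (Set.Ioo 0 1))
    (hw_int : ∀ j, ∀ σ : ℝ, 0 < σ →
      IntegrableOn (fun x : ℝ => x ^ (σ - 1) * |w j x|) (Set.Ioo 0 1))
    (hw_mellin : ∀ j, ∀ s : ℝ, 1 < s →
      ∫ x in Set.Ioo (0:ℝ) 1, x ^ (s - 1) * w j x
        = (∏ i, Real.Gamma (s + a i)) /
          (∏ i, Real.Gamma (s + b i + if i = j then 1 else 0)))
    (n : Fin r → ℕ)
    (hn : ∀ i j, |(n i : ℤ) - (n j : ℤ)| ≤ 1)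
    (A : Fin r → Polynomial ℝ)
    (hA : ∀ j, (A j).degree < (n j : WithBot ℕ)) :
    ∃ p : Polynomial ℝ, p.degree < ((∑ j, n j : ℕ) : WithBot ℕ) ∧
      ∀ s : ℝ, 1 < s →
        ∫ x in Set.Ioo (0:ℝ) 1, (∑ j, (A j).eval x * w j x) * x ^ (s - 1)
          = (∏ i, Real.Gamma (s + a i)) /
            (∏ i, Real.Gamma (s + b i + n i)) * p.eval s :=
  stmt_0_general r a b ha hb w hw_cont hw_int hw_mellin n hn A hA
end

section
/- Let r ≥ 1 and a, b ∈ (−1,∞)^r with the components of b pairwise distinct, and fix J ∈ {1,…,r}. Define c_j = ∏_{i=1}^r (a_i − b_j) / ∏_{i≠j} (b_i − b_j) for j ≠ J, and c_J = ∏_{i=1}^r (a_i − b_J) / ∏_{i≠J} (b_i − b_J) + b_J. Then for every real s > 1, Σ_{j=1}^r (c_j + s·δ_{j,J}) · Γ(s+a)/Γ(s+b+e_j) = (s + b_J + 1) · Γ(s+1+a)/Γ(s+1+b+e_J), where δ is the Kronecker delta. (This is the key identity underlying the matrix Pearson equation for the Jacobi-like system of weights.) -/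
/-!
Since `Γ(x + 1) = x Γ(x)`, dividing both sides by `∏ Γ(s + a_i) / ∏ Γ(s + b_i)` reduces the
identity to the rational identity `∑_j (c_j + s δ_{jJ}) / (s + b_j) = ∏ (s + a_i) / ∏ (s + b_i)`.
This is the partial fraction decomposition of `P/Q` with `P = ∏ (X + a_i)` and `Q = ∏ (X + b_i)`:
as `P - Q` has degree `< r`, Lagrange interpolation at the nodes `-b_j` gives
`P/Q - 1 = ∑_j P(-b_j) / (Q'(-b_j) (X + b_j))`, and the correction `b_J` in `c_J` together with
the term `s δ_{jJ}` contributes the missing `1`.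
-/

open Finset Polynomial Lagrange

section PartialFractions

variable {F ι : Type*} [Field F] [DecidableEq ι]

theorem Lagrange.eval_div_eval_nodal {s : Finset ι} {v : ι → F} {f : F[X]} {x : F}
    (hvs : Set.InjOn v s) (hf : f.degree < #s) (hx : ∀ i ∈ s, x ≠ v i) :
    f.eval x / (nodal s v).eval x = ∑ i ∈ s, nodalWeight s v i * f.eval (v i) / (x - v i) := by
  rw [eq_interpolate hvs hf, eval_interpolate_not_at_node _ hx,
    mul_div_cancel_left₀ _ (eval_nodal_not_at_node hx)]
  refine sum_congr rfl fun i _ => ?_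
  rw [← eq_interpolate hvs hf]
  ring

variable [Fintype ι]

theorem sum_prod_sub_div_prod_erase_sub_div_add {a b : ι → F} (hb : Function.Injective b)
    {x : F} (hx : ∀ i, x + b i ≠ 0) :
    ∑ j, (∏ i, (a i - b j)) / (∏ i ∈ univ.erase j, (b i - b j)) / (x + b j)
      = (∏ i, (x + a i)) / (∏ i, (x + b i)) - 1 := by
  set f := nodal univ (-a) - nodal univ (-b)
  have hf : f.degree < #(univ : Finset ι) := by
    have := degree_sub_lt_left (p := nodal univ (-a)) (q := nodal univ (-b))
      (by rw [degree_nodal, degree_nodal]) nodal_ne_zero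
      (by rw [nodal_monic.leadingCoeff, nodal_monic.leadingCoeff])
    rwa [degree_nodal] at this
  have hnodes : ∀ i ∈ univ, x ≠ (-b) i := fun i _ h => hx i (by simp [h])
  have := eval_div_eval_nodal (fun i _ j _ h => hb (neg_injective h)) hf hnodes
  have hQ : ∏ i, (x + b i) ≠ 0 := prod_ne_zero_iff.mpr fun i _ => hx i
  have hnode_root : ∀ j, ∏ i, (b i - b j) = 0 := fun j => prod_eq_zero (mem_univ j) (sub_self _)
  simp only [f, eval_sub, eval_nodal, nodalWeight, Pi.neg_apply, sub_neg_eq_add, neg_add_eq_sub,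
    hnode_root, sub_zero, prod_inv_distrib, inv_mul_eq_div] at this
  rwa [sub_div, div_self hQ, eq_comm] at this

theorem sum_add_ite_div_eq_prod_div_prod {a b c : ι → F} (hb : Function.Injective b) (J : ι)
    (hc : ∀ j, c j = (∏ i, (a i - b j)) / (∏ i ∈ univ.erase j, (b i - b j))
      + if j = J then b J else 0)
    {x : F} (hx : ∀ i, x + b i ≠ 0) :
    ∑ j, (c j + x * if j = J then 1 else 0) / (x + b j)
      = (∏ i, (x + a i)) / (∏ i, (x + b i)) := by
  have hsplit : ∀ j, (c j + x * if j = J then 1 else 0) / (x + b j)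
      = (∏ i, (a i - b j)) / (∏ i ∈ univ.erase j, (b i - b j)) / (x + b j)
        + if j = J then 1 else 0 := fun j => by
    rw [hc j]
    split_ifs with h
    · subst h; field_simp [hx j]; ring
    · simp
  simp only [hsplit, sum_add_distrib, sum_ite_eq', mem_univ, if_true,
    sum_prod_sub_div_prod_erase_sub_div_add hb hx, sub_add_cancel]

end PartialFractions

theorem Real.prod_Gamma_add_ite_eq {ι : Type*} [Fintype ι] [DecidableEq ι] (x : ℝ) (g : ι → ℝ)
    {j : ι} (hj : x + g j ≠ 0) :
    ∏ i, Gamma (x + g i + if i = j then 1 else 0) = (x + g j) * ∏ i, Gamma (x + g i) := by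
  calc ∏ i, Gamma (x + g i + if i = j then 1 else 0)
      = ∏ i, (if i = j then x + g i else 1) * Gamma (x + g i) :=
        prod_congr rfl fun i _ => by
          split_ifs with h
          · subst h; exact Gamma_add_one hj
          · simp
    _ = (x + g j) * ∏ i, Gamma (x + g i) := by rw [prod_mul_distrib, prod_ite_eq']; simp

theorem Real.prod_Gamma_add_one_add {ι : Type*} [Fintype ι] (x : ℝ) (g : ι → ℝ)
    (hg : ∀ i, x + g i ≠ 0) :
    ∏ i, Gamma (x + 1 + g i) = (∏ i, (x + g i)) * ∏ i, Gamma (x + g i) := by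
  rw [← prod_mul_distrib]
  exact prod_congr rfl fun i _ => by rw [add_right_comm, Gamma_add_one (hg i)]

theorem stmt_1_general
    (r : ℕ)
    (a b : Fin r → ℝ)
    (ha : ∀ i, -1 < a i) (hb : ∀ i, -1 < b i)
    (hbdist : Function.Injective b)
    (J : Fin r)
    (c : Fin r → ℝ)
    (hc : ∀ j, c j =
      (∏ i, (a i - b j)) / (∏ i ∈ Finset.univ.erase j, (b i - b j))
        + if j = J then b J else 0) :
    ∀ s : ℝ, 1 < s →
      ∑ j, (c j + s * (if j = J then 1 else 0)) *
          ((∏ i, Real.Gamma (s + a i)) /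
           (∏ i, Real.Gamma (s + b i + if i = j then 1 else 0)))
        = (s + b J + 1) *
          ((∏ i, Real.Gamma (s + 1 + a i)) /
           (∏ i, Real.Gamma (s + 1 + b i + if i = J then 1 else 0))) := by
  intro s hs
  have hsa : ∀ i, s + a i ≠ 0 := fun i => by linarith [ha i]
  have hsb : ∀ i, s + b i ≠ 0 := fun i => by linarith [hb i]
  have hsbJ : s + 1 + b J ≠ 0 := by linarith [hb J]
  have hΓb : ∏ i, Real.Gamma (s + b i) ≠ 0 :=
    prod_ne_zero_iff.mpr fun i _ => (Real.Gamma_pos_of_pos (by linarith [hb i])).ne'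
  have hQ : ∏ i, (s + b i) ≠ 0 := prod_ne_zero_iff.mpr fun i _ => hsb i
  simp only [Real.prod_Gamma_add_ite_eq s b (hsb _), Real.prod_Gamma_add_ite_eq (s + 1) b hsbJ,
    Real.prod_Gamma_add_one_add s a hsa, Real.prod_Gamma_add_one_add s b hsb]
  calc ∑ j, (c j + s * if j = J then 1 else 0) *
        ((∏ i, Real.Gamma (s + a i)) / ((s + b j) * ∏ i, Real.Gamma (s + b i)))
      = (∑ j, (c j + s * if j = J then 1 else 0) / (s + b j)) *
          ((∏ i, Real.Gamma (s + a i)) / ∏ i, Real.Gamma (s + b i)) := by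
        rw [sum_mul]
        exact sum_congr rfl fun j _ => by field_simp [hsb j]
    _ = _ := by
        rw [sum_add_ite_div_eq_prod_div_prod hbdist J hc hsb]
        field_simp
        ring

/-- The key Gamma-function identity underlying the matrix Pearson equation
for the Jacobi-like system of weights. -/
theorem stmt_1
    (r : ℕ) (hr : 1 ≤ r)
    (a b : Fin r → ℝ)
    (ha : ∀ i, -1 < a i) (hb : ∀ i, -1 < b i)
    (hbdist : Function.Injective b)
    (J : Fin r)
    (c : Fin r → ℝ)
    (hc : ∀ j, c j =
      (∏ i, (a i - b j)) / (∏ i ∈ Finset.univ.erase j, (b i - b j))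
        + if j = J then b J else 0) :
    ∀ s : ℝ, 1 < s →
      ∑ j, (c j + s * (if j = J then 1 else 0)) *
          ((∏ i, Real.Gamma (s + a i)) /
           (∏ i, Real.Gamma (s + b i + if i = j then 1 else 0)))
        = (s + b J + 1) *
          ((∏ i, Real.Gamma (s + 1 + a i)) /
           (∏ i, Real.Gamma (s + 1 + b i + if i = J then 1 else 0))) :=
  stmt_1_general r a b ha hb hbdist J c hc
end

section
/- Let 0 ≤ p < q, a ∈ (−1,∞)^p, b ∈ (−1,∞)^q, and fix w ∈ ℝ. For each integer n ≥ 1 define H_n(w) = Σ_{k=0}^∞ [(qn)_k · ∏_{i=1}^p (a_i+qn)_k / (∏_{i=1}^q (b_i+(q+1)n)_k · k!)] w^k (an everywhere-convergent series since p+1 ≤ q). Then, as n → ∞: if p = q − 1, H_n(w) → exp((q^q/(q+1)^q) · w); and if p < q − 1, H_n(w) → 1. -/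
/-!
The `k`-th term of `H_n(w)` is `(∏_{j<k} r_n(j)) · w^k / k!`, where `r_n(j) = coeffRatio a b n j`
is the quotient of the factors `qn + j` and `a_i + qn + j` by the factors `b_i + (q+1)n + j`.
Once `n ≥ max a_i + 1`, every numerator factor is at most `E = (q+1)n - 1 + j` and every
denominator factor at least `E ≥ 1`, so `0 ≤ r_n(j) ≤ E^{-(q-p-1)} ≤ 1`. Hence the terms are
dominated by `|w|^k / k!` and Tannery's theorem applies: if `r_n(j) → c` for every `j`, then
`H_n(w) → ∑ c^k w^k / k! = exp(c w)`. For `p = q - 1` pairing the numerator and denominator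
factors gives `c = (q/(q+1))^q`; for `p < q - 1` the bound `r_n(j) ≤ 1/E ≤ 1/n` gives `c = 0`.
-/

open Finset Filter

open scoped Topology Nat

theorem ascPochhammer_eval_eq_prod_range {R : Type*} [CommSemiring R] (k : ℕ) (x : R) :
    (ascPochhammer R k).eval x = ∏ j ∈ range k, (x + j) := by
  induction k with
  | zero => simp
  | succ k ih => rw [ascPochhammer_succ_eval, ih, prod_range_succ]

theorem tendsto_affine_div_affine (α β γ : ℝ) {δ : ℝ} (hδ : δ ≠ 0) :
    Tendsto (fun x : ℝ => (α + β * x) / (γ + δ * x)) atTop (𝓝 (β / δ)) := by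
  have hlim (μ ν : ℝ) : Tendsto (fun x : ℝ => μ * x⁻¹ + ν) atTop (𝓝 ν) := by
    simpa using (tendsto_inv_atTop_zero.const_mul μ).add_const ν
  refine ((hlim α β).div (hlim γ δ) hδ).congr' ?_
  filter_upwards [eventually_gt_atTop 0] with x hx
  simp only [Pi.div_apply]
  rw [← mul_div_mul_right _ _ hx.ne']
  congr 1 <;> field_simp

theorem tendsto_tsum_prod_mul_pow_div_factorial {α : Type*} {l : Filter α} {r : α → ℕ → ℝ}
    {c : ℝ} (w : ℝ) (hlim : ∀ j, Tendsto (r · j) l (𝓝 c))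
    (hbound : ∀ᶠ x in l, ∀ j, |r x j| ≤ 1) :
    Tendsto (fun x => ∑' k, (∏ j ∈ range k, r x j) * (w ^ k / k !)) l
      (𝓝 (Real.exp (c * w))) := by
  have hexp : Real.exp (c * w) = ∑' k : ℕ, (∏ _j ∈ range k, c) * (w ^ k / k !) := by
    rw [Real.exp_eq_exp_ℝ, ← (NormedSpace.expSeries_div_hasSum_exp (c * w)).tsum_eq]
    simp only [prod_const, card_range, mul_pow, mul_div_assoc]
  rw [hexp]
  refine tendsto_tsum_of_dominated_convergence (Real.summable_pow_div_factorial |w|)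
    (fun k => (tendsto_finsetProd _ fun j _ => hlim j).mul_const _) ?_
  filter_upwards [hbound] with x hx k
  rw [norm_mul, norm_prod, Real.norm_eq_abs, abs_div, abs_pow, Nat.abs_cast]
  exact mul_le_of_le_one_left (by positivity)
    (prod_le_one (fun j _ => norm_nonneg _) fun j _ => hx j)

section CoeffRatio

variable {p q : ℕ} (a : Fin p → ℝ) (b : Fin q → ℝ)

noncomputable def coeffRatio (x : ℝ) (j : ℕ) : ℝ :=
  (q * x + j) * (∏ i, (a i + q * x + j)) / ∏ i, (b i + (q + 1) * x + j)

variable {a b} {x : ℝ}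

theorem le_succ_mul_sub_one_add (hq : 0 < q) (hx : 1 ≤ x) (j : ℕ) :
    x ≤ (q + 1) * x - 1 + j := by
  have hqx : 1 ≤ (q : ℝ) * x := one_le_mul_of_one_le_of_one_le (by exact_mod_cast hq) hx
  linarith [j.cast_nonneg (α := ℝ)]

theorem coeffRatio_numerator_le_pow (hq : 0 < q) (ha : ∀ i, -1 < a i) (hx : 1 ≤ x)
    (hxa : ∀ i, a i + 1 ≤ x) (j : ℕ) :
    (q * x + j) * ∏ i, (a i + q * x + j) ≤ ((q + 1) * x - 1 + j) ^ (p + 1) := by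
  have hqx : 1 ≤ (q : ℝ) * x := one_le_mul_of_one_le_of_one_le (by exact_mod_cast hq) hx
  have hj : (0 : ℝ) ≤ j := j.cast_nonneg
  rw [pow_succ', ← Fin.prod_const]
  gcongr ?_ * ∏ i, ?_
  · exact prod_nonneg fun i _ => by linarith [ha i]
  · linarith
  · linarith
  · exact fun i _ => by linarith [ha i]
  · linarith [hxa i]

theorem pow_le_coeffRatio_denominator (hb : ∀ i, -1 < b i) (hx : 1 ≤ x) (j : ℕ) :
    ((q + 1) * x - 1 + j) ^ q ≤ ∏ i, (b i + (q + 1) * x + j) := by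
  have hj : (0 : ℝ) ≤ j := j.cast_nonneg
  have hq : (0 : ℝ) ≤ q := q.cast_nonneg
  rw [← Fin.prod_const]
  gcongr with i
  · exact fun _ _ => by nlinarith [mul_nonneg hq (zero_le_one.trans hx)]
  · linarith [hb i]

theorem coeffRatio_nonneg (hq : 0 < q) (ha : ∀ i, -1 < a i) (hb : ∀ i, -1 < b i)
    (hx : 1 ≤ x) (j : ℕ) : 0 ≤ coeffRatio a b x j := by
  have hqx : 1 ≤ (q : ℝ) * x := one_le_mul_of_one_le_of_one_le (by exact_mod_cast hq) hx
  have hj : (0 : ℝ) ≤ j := j.cast_nonneg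
  have hq' : (0 : ℝ) ≤ q := q.cast_nonneg
  refine div_nonneg (mul_nonneg (by linarith) (prod_nonneg fun i _ => ?_))
    (prod_nonneg fun i _ => ?_)
  · linarith [ha i]
  · nlinarith [hb i]

theorem coeffRatio_le_inv_pow (hpq : p < q) (ha : ∀ i, -1 < a i) (hb : ∀ i, -1 < b i)
    (hx : 1 ≤ x) (hxa : ∀ i, a i + 1 ≤ x) (j : ℕ) :
    coeffRatio a b x j ≤ (((q + 1) * x - 1 + j) ^ (q - (p + 1)))⁻¹ := by
  have hE : 0 < (q + 1) * x - 1 + j :=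
    (one_pos.trans_le hx).trans_le (le_succ_mul_sub_one_add hpq.pos hx j)
  set E : ℝ := (q + 1) * x - 1 + j
  have hdiv : E ^ (p + 1) / E ^ q = (E ^ (q - (p + 1)))⁻¹ := by
    rw [pow_sub₀ E hE.ne' hpq, mul_inv, inv_inv, div_eq_mul_inv, mul_comm]
  rw [← hdiv]
  exact div_le_div₀ (by positivity) (coeffRatio_numerator_le_pow (by omega) ha hx hxa j)
    (by positivity) (pow_le_coeffRatio_denominator hb hx j)

theorem eventually_abs_coeffRatio_le_one (hpq : p < q) (ha : ∀ i, -1 < a i)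
    (hb : ∀ i, -1 < b i) : ∀ᶠ x in atTop, ∀ j, |coeffRatio a b x j| ≤ 1 := by
  filter_upwards [eventually_ge_atTop 1, eventually_all.2 fun i => eventually_ge_atTop (a i + 1)]
    with x hx hxa j
  rw [abs_of_nonneg (coeffRatio_nonneg hpq.pos ha hb hx j)]
  refine (coeffRatio_le_inv_pow hpq ha hb hx hxa j).trans (inv_le_one_of_one_le₀ ?_)
  exact one_le_pow₀ (hx.trans (le_succ_mul_sub_one_add hpq.pos hx j))

theorem tendsto_coeffRatio_zero (hpq : p + 1 < q) (ha : ∀ i, -1 < a i)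
    (hb : ∀ i, -1 < b i) (j : ℕ) : Tendsto (coeffRatio a b · j) atTop (𝓝 0) := by
  have hq : 0 < q := by omega
  refine squeeze_zero' ?_ ?_ tendsto_inv_atTop_zero
  · filter_upwards [eventually_ge_atTop 1] with x hx using coeffRatio_nonneg hq ha hb hx j
  filter_upwards [eventually_ge_atTop 1, eventually_all.2 fun i => eventually_ge_atTop (a i + 1)]
    with x hx hxa
  have hE := le_succ_mul_sub_one_add hq hx j
  calc coeffRatio a b x j ≤ (((q + 1) * x - 1 + j) ^ (q - (p + 1)))⁻¹ :=
        coeffRatio_le_inv_pow (by omega) ha hb hx hxa j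
    _ ≤ x⁻¹ := by
        gcongr
        exact hE.trans (le_self_pow₀ (hx.trans hE) (by omega))

theorem tendsto_coeffRatio_of_eq_succ (a : Fin p → ℝ) (b : Fin (p + 1) → ℝ) (j : ℕ) :
    Tendsto (coeffRatio a b · j) atTop
      (𝓝 ((((p + 1 : ℕ) : ℝ) / (((p + 1 : ℕ) : ℝ) + 1)) ^ (p + 1))) := by
  set c : ℝ := ((p + 1 : ℕ) : ℝ) / (((p + 1 : ℕ) : ℝ) + 1)
  have hc (α γ : ℝ) : Tendsto (fun x : ℝ => (α + (p + 1 : ℕ) * x + j) /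
      (γ + (((p + 1 : ℕ) : ℝ) + 1) * x + j)) atTop (𝓝 c) :=
    (tendsto_affine_div_affine (α + j) _ (γ + j) (by positivity)).congr fun x => by ring_nf
  have h0 : Tendsto (fun x : ℝ => ((p + 1 : ℕ) * x + j) /
      (b 0 + (((p + 1 : ℕ) : ℝ) + 1) * x + j)) atTop (𝓝 c) := by
    simpa only [zero_add] using hc 0 (b 0)
  have hprod := h0.mul (tendsto_finsetProd univ fun i _ => hc (a i) (b i.succ))
  rw [prod_const, card_univ, Fintype.card_fin, ← pow_succ'] at hprod
  refine hprod.congr fun x => ?_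
  rw [coeffRatio, Fin.prod_univ_succ, mul_div_mul_comm, prod_div_distrib]

theorem pochhammer_term_eq_prod_coeffRatio (a : Fin p → ℝ) (b : Fin q → ℝ) (w : ℝ) (n k : ℕ) :
    (ascPochhammer ℝ k).eval ((q * n : ℕ) : ℝ) * (∏ i, (ascPochhammer ℝ k).eval (a i + q * n)) /
        ((∏ i, (ascPochhammer ℝ k).eval (b i + (q + 1) * n)) * k !) * w ^ k =
      (∏ j ∈ range k, coeffRatio a b n j) * (w ^ k / k !) := by
  simp only [coeffRatio, ascPochhammer_eval_eq_prod_range, prod_div_distrib, prod_mul_distrib]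
  rw [prod_comm (s := univ), prod_comm (s := univ)]
  push_cast
  ring

end CoeffRatio

/-- Confluent limit of the `_{p+1}F_q`-hypergeometric factor in the error of
the Hermite–Padé approximation: as `n → ∞`, `H_n(w) → exp((q^q/(q+1)^q)·w)` if `p = q-1`,
and `H_n(w) → 1` if `p < q-1`. -/
theorem stmt_19
    (p q : ℕ) (hpq : p < q)
    (a : Fin p → ℝ) (b : Fin q → ℝ)
    (ha : ∀ i, -1 < a i) (hb : ∀ i, -1 < b i)
    (w : ℝ)
    (H : ℕ → ℝ)
    (hH : ∀ n : ℕ, H n = ∑' k : ℕ,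
      (ascPochhammer ℝ k).eval ((q * n : ℕ) : ℝ) *
        (∏ i, (ascPochhammer ℝ k).eval (a i + q * n)) /
        ((∏ i, (ascPochhammer ℝ k).eval (b i + (q + 1) * n)) * k.factorial) * w ^ k) :
    (p = q - 1 →
      Tendsto H atTop (nhds (Real.exp ((q : ℝ) ^ q / ((q : ℝ) + 1) ^ q * w)))) ∧
    (p + 1 < q → Tendsto H atTop (nhds 1)) := by
  have hH' : H = fun n : ℕ => ∑' k, (∏ j ∈ range k, coeffRatio a b n j) * (w ^ k / k !) :=
    funext fun n => (hH n).trans (tsum_congr (pochhammer_term_eq_prod_coeffRatio a b w n))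
  have hbound :=
    tendsto_natCast_atTop_atTop.eventually (eventually_abs_coeffRatio_le_one hpq ha hb)
  have hlim {c : ℝ} (hc : ∀ j, Tendsto (coeffRatio a b · j) atTop (𝓝 c)) :=
    tendsto_tsum_prod_mul_pow_div_factorial (r := fun (n : ℕ) j => coeffRatio a b n j) w
      (fun j => (hc j).comp tendsto_natCast_atTop_atTop) hbound
  subst hH'
  refine ⟨fun hp => ?_, fun hp => ?_⟩
  · obtain rfl : q = p + 1 := by omega
    simpa only [div_pow] using hlim (tendsto_coeffRatio_of_eq_succ a b)
  · simpa using hlim (tendsto_coeffRatio_zero hp ha hb)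
end
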